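/- Let f ∈ C_+^q(K,ℂ) with ‖f‖_{ℓ²(K_q)} = 1 and set η = (1/√2)(I − i S^down) d_{Y_q}* f ∈ ℓ²(E(Y_q)). Then η is a unit vector with U_q^down η = iη, and for every n ≥ 0 and τ ∈ K_q: P_n^down(q, η; [τ]) = (1/2)|f(τ)|² + (1/2)|f(τ̄)|² + Σ_{(τ,τ')∈E(Y_q)} (1/(2 deg_Y(τ')))·|f(τ')|². In particular, P_n^down(q, η; [τ]) is independent of n, and when f(τ) = (2|S_q|)^{−1/2} for all τ ∈ K_q it equals 1/(2|S_q|) + Σ_{(τ,τ')∈E(Y_q)} (1/(2 deg_Y(τ')))·(1/(2|S_q|)). -/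

import Mathlib

open scoped BigOperators

/-- The set of oriented `q`-simplices of a simplicial complex, together with the
orientation-reversal involution `bar` (writing `τ̄` for `bar τ`). -/
structure OrientedSet where
  K : Type
  bar : K → K
  bar_invol : ∀ τ, bar (bar τ) = τ
  bar_ne : ∀ τ, bar τ ≠ τ

/-- The data of an up graph (`mult = 2(q+1)`) or a down graph (`mult = 2`) on the set of
oriented `q`-simplices: the sign function `η` (extended by `0` off the edge set, so that
`(τ₁, τ₂)` is an edge iff `eta τ₁ τ₂ ≠ 0`), the degree function (`deg_X`, resp. `deg_Y`),
and local finiteness; the degree of a vertex `τ` in the graph is `mult * deg τ`. -/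
structure GroverStructure (O : OrientedSet) where
  eta : O.K → O.K → ℝ
  eta_symm : ∀ τ₁ τ₂, eta τ₁ τ₂ = eta τ₂ τ₁
  eta_vals : ∀ τ₁ τ₂, eta τ₁ τ₂ = 0 ∨ eta τ₁ τ₂ = 1 ∨ eta τ₁ τ₂ = -1
  eta_bar_left : ∀ τ₁ τ₂, eta (O.bar τ₁) τ₂ = - eta τ₁ τ₂
  eta_self : ∀ τ, eta τ τ = 0
  eta_bar_self : ∀ τ, eta τ (O.bar τ) = 0
  deg : O.K → ℕ
  deg_pos : ∀ τ, 0 < deg τ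
  deg_bar : ∀ τ, deg (O.bar τ) = deg τ
  mult : ℕ
  nbhdFinite : ∀ τ, {τ' | eta τ τ' ≠ 0}.Finite
  nbhd_card : ∀ τ, (nbhdFinite τ).toFinset.card = mult * deg τ

namespace GroverStructure

variable {O : OrientedSet} (Y : GroverStructure O)

/-- `(τ₁, τ₂)` is an oriented edge of the up/down graph. -/
def Edge (τ₁ τ₂ : O.K) : Prop := Y.eta τ₁ τ₂ ≠ 0

/-- The normalization constant `(mult * deg τ)^(-1/2)`. -/
noncomputable def c (τ : O.K) : ℂ := ((Real.sqrt (Y.mult * Y.deg τ) : ℝ) : ℂ)⁻¹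

/-- The operator `d : ℓ²(E) → ℓ²(K)`; elements of `ℓ²(E)` are represented as
functions on `K × K` (supported on the set of edges). -/
noncomputable def d (g : O.K × O.K → ℂ) : O.K → ℂ :=
  fun τ => Y.c τ * ∑ᶠ τ' ∈ {τ' | Y.eta τ τ' ≠ 0}, g (τ, τ')

/-- The adjoint `d* : ℓ²(K) → ℓ²(E)`. -/
noncomputable def dstar (f : O.K → ℂ) : O.K × O.K → ℂ :=
  fun p => if Y.eta p.1 p.2 ≠ 0 then Y.c p.1 * f p.1 else 0

/-- The shift operator `(S g)(τ₁,τ₂) = η(τ₁,τ₂) • g(τ₂,τ₁)`. -/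
noncomputable def shift (g : O.K × O.K → ℂ) : O.K × O.K → ℂ :=
  fun p => (Y.eta p.1 p.2 : ℂ) * g (p.2, p.1)

/-- The discriminant operator `D = d ∘ S ∘ d*`. -/
noncomputable def disc (f : O.K → ℂ) : O.K → ℂ := Y.d (Y.shift (Y.dstar f))

/-- The Grover walk `U = S (2 d* d − I)`. -/
noncomputable def walk (g : O.K × O.K → ℂ) : O.K × O.K → ℂ :=
  Y.shift (fun p => 2 * Y.dstar (Y.d g) p - g p)

/-- Membership in `ℓ²(E)`: square summable and supported on the edge set. -/
def MemEdge (g : O.K × O.K → ℂ) : Prop :=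
  Memℓp g 2 ∧ ∀ p : O.K × O.K, ¬ Y.Edge p.1 p.2 → g p = 0

end GroverStructure

/-- The orthogonal projection of `ℓ²(K_q)` onto the cochain space
`C^q(K,ℂ) = {f : f(τ̄) = -f(τ)}`. -/
noncomputable def projC (O : OrientedSet) (f : O.K → ℂ) : O.K → ℂ :=
  fun τ => (f τ - f (O.bar τ)) / 2

/-- The finding probability at time `n` at the simplex `[τ] ∈ S_q` with initial state
`φ ∈ ℓ²(E)`: the sum of `|((U)^n φ)(τ₁,τ₂)|²` over the edges `(τ₁,τ₂)` with
`[τ₁] = [τ]` (that is, `τ₁ = τ` or `τ₁ = τ̄`). -/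
noncomputable def GroverStructure.findProb {O : OrientedSet} (Y : GroverStructure O)
    (n : ℕ) (φ : O.K × O.K → ℂ) (τ : O.K) : ℝ :=
  ∑ᶠ p ∈ {p : O.K × O.K | Y.eta p.1 p.2 ≠ 0 ∧ (p.1 = τ ∨ p.1 = O.bar τ)},
    ‖(Y.walk)^[n] φ p‖ ^ 2

/-- The state `η = (1/√2)(I − i S^down) d_{Y_q}* f`. -/
noncomputable def GroverStructure.statVec {O : OrientedSet} (Y : GroverStructure O)
    (f : O.K → ℂ) : O.K × O.K → ℂ :=
  fun p => ((Real.sqrt 2 : ℝ) : ℂ)⁻¹ * (Y.dstar f p - Complex.I * Y.shift (Y.dstar f) p)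


/-!
Because `f` is invariant under `τ ↦ τ̄` while `η(τ, τ̄') = -η(τ, τ')`, every `η`-weighted
neighbourhood sum of `f` vanishes, so `d (statVec f) = f / √2`; since `η² = 1` on edges, this
makes `statVec f` an eigenvector of the walk with eigenvalue `i`, so that
`|Uⁿ (statVec f)| = |statVec f|` pointwise. On the edges `(τ₁, τ₂)` and `(τ̄₁, τ₂)` the state
takes the values `(A ∓ iB)/√2` with `A = c(τ₁) f(τ₁)` and `|B| = c(τ₂) |f(τ₂)|`, so by the
parallelogram law their squared moduli add up to `|A|² + |B|²`. Summing over the neighbours of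
`τ` gives the finding probability, and summing over all edges (each of the two terms counted
`mult · deg` times) gives the norm.
-/

open scoped ENNReal

theorem tsum_eq_toReal_tsum_ofReal {α : Type*} {g : α → ℝ} (hg : ∀ x, 0 ≤ g x) :
    ∑' x, g x = (∑' x, ENNReal.ofReal (g x)).toReal := by
  rw [ENNReal.tsum_toReal_eq fun _ => ENNReal.ofReal_ne_top]
  exact tsum_congr fun x => (ENNReal.toReal_ofReal (hg x)).symm

theorem norm_inv_sqrt_two_mul_sq (z : ℂ) : ‖((Real.sqrt 2 : ℝ) : ℂ)⁻¹ * z‖ ^ 2 = ‖z‖ ^ 2 / 2 := by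
  rw [norm_mul, mul_pow, norm_inv, Complex.norm_real, Real.norm_of_nonneg (Real.sqrt_nonneg 2),
    inv_pow, Real.sq_sqrt zero_le_two, inv_mul_eq_div]

namespace GroverStructure

variable {O : OrientedSet} (Y : GroverStructure O)

theorem eta_bar_right (τ₁ τ₂ : O.K) : Y.eta τ₁ (O.bar τ₂) = -Y.eta τ₁ τ₂ := by
  rw [Y.eta_symm, Y.eta_bar_left, Y.eta_symm]

theorem eta_bar_left_ne_zero_iff {τ₁ τ₂ : O.K} : Y.eta (O.bar τ₁) τ₂ ≠ 0 ↔ Y.eta τ₁ τ₂ ≠ 0 := by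
  rw [Y.eta_bar_left, neg_ne_zero]

theorem eta_mul_self {τ₁ τ₂ : O.K} (h : Y.eta τ₁ τ₂ ≠ 0) : Y.eta τ₁ τ₂ * Y.eta τ₁ τ₂ = 1 := by
  rcases Y.eta_vals τ₁ τ₂ with h1 | h1 | h1 <;> simp_all

theorem norm_eta_mul {τ₁ τ₂ : O.K} (h : Y.eta τ₁ τ₂ ≠ 0) (z : ℂ) :
    ‖(Y.eta τ₁ τ₂ : ℂ) * z‖ = ‖z‖ := by
  rcases Y.eta_vals τ₁ τ₂ with h1 | h1 | h1 <;> simp_all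

theorem c_bar (τ : O.K) : Y.c (O.bar τ) = Y.c τ := by
  rw [c, Y.deg_bar, c]

theorem c_mul_self (τ : O.K) : Y.c τ * Y.c τ = ((Y.mult * Y.deg τ : ℕ) : ℂ)⁻¹ := by
  rw [c, ← mul_inv, ← Complex.ofReal_mul, Real.mul_self_sqrt (by positivity)]
  push_cast
  rfl

theorem norm_c_mul_sq (τ : O.K) (z : ℂ) :
    ‖Y.c τ * z‖ ^ 2 = ‖z‖ ^ 2 / (Y.mult * Y.deg τ) := by
  rw [norm_mul, mul_pow, c, norm_inv, Complex.norm_real, Real.norm_of_nonneg (Real.sqrt_nonneg _),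
    inv_pow, Real.sq_sqrt (by positivity), inv_mul_eq_div]

theorem mult_mul_deg_ne_zero (hm : Y.mult ≠ 0) (τ : O.K) : Y.mult * Y.deg τ ≠ 0 :=
  mul_ne_zero hm (Y.deg_pos τ).ne'

theorem mult_mul_deg_mul_norm_c_mul_sq (hm : Y.mult ≠ 0) (τ : O.K) (z : ℂ) :
    (Y.mult * Y.deg τ : ℝ) * ‖Y.c τ * z‖ ^ 2 = ‖z‖ ^ 2 := by
  rw [norm_c_mul_sq, mul_div_cancel₀]
  exact_mod_cast Y.mult_mul_deg_ne_zero hm τ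

noncomputable def nbhd (τ : O.K) : Finset O.K := (Y.nbhdFinite τ).toFinset

theorem mem_nbhd {τ τ' : O.K} : τ' ∈ Y.nbhd τ ↔ Y.eta τ τ' ≠ 0 :=
  Set.Finite.mem_toFinset _

theorem card_nbhd (τ : O.K) : (Y.nbhd τ).card = Y.mult * Y.deg τ := Y.nbhd_card τ

theorem finsum_mem_eq_sum_nbhd {M : Type*} [AddCommMonoid M] (g : O.K → M) (τ : O.K) :
    ∑ᶠ τ' ∈ {τ' | Y.eta τ τ' ≠ 0}, g τ' = ∑ τ' ∈ Y.nbhd τ, g τ' :=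
  finsum_mem_eq_finite_toFinset_sum _ _

theorem sum_nbhd_eta_mul_eq_zero (g : O.K → ℂ) (hg : ∀ τ, g (O.bar τ) = g τ) (τ : O.K) :
    ∑ τ' ∈ Y.nbhd τ, (Y.eta τ τ' : ℂ) * g τ' = 0 := by
  refine Finset.sum_involution (fun τ' _ => O.bar τ') (fun τ' _ => ?_)
    (fun τ' _ _ => O.bar_ne τ') (fun τ' hτ' => ?_) (fun τ' _ => O.bar_invol τ')
  · rw [eta_bar_right, hg]
    push_cast
    ring
  · rw [mem_nbhd] at hτ' ⊢
    rwa [eta_bar_right, neg_ne_zero]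

theorem d_apply (g : O.K × O.K → ℂ) (τ : O.K) :
    Y.d g τ = Y.c τ * ∑ τ' ∈ Y.nbhd τ, g (τ, τ') := by
  rw [d, finsum_mem_eq_sum_nbhd]

theorem d_smul (a : ℂ) (g : O.K × O.K → ℂ) : Y.d (a • g) = a • Y.d g := by
  funext τ
  simp only [d_apply, Pi.smul_apply, smul_eq_mul, ← Finset.mul_sum]
  ring

theorem walk_smul (a : ℂ) (g : O.K × O.K → ℂ) : Y.walk (a • g) = a • Y.walk g := by
  funext p
  simp only [walk, shift, dstar, d_smul, Pi.smul_apply, smul_eq_mul]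
  split_ifs <;> ring

theorem iterate_walk_of_walk_eq_smul {g : O.K × O.K → ℂ} {a : ℂ} (h : Y.walk g = a • g)
    (n : ℕ) : (Y.walk)^[n] g = a ^ n • g := by
  induction n with
  | zero => simp
  | succ n ih => rw [Function.iterate_succ_apply', ih, walk_smul, h, smul_smul, pow_succ]

theorem findProb_eq_sum_nbhd (n : ℕ) (φ : O.K × O.K → ℂ) (τ : O.K) :
    Y.findProb n φ τ = ∑ τ' ∈ Y.nbhd τ,
      (‖(Y.walk)^[n] φ (τ, τ')‖ ^ 2 + ‖(Y.walk)^[n] φ (O.bar τ, τ')‖ ^ 2) := by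
  classical
  have hset : {p : O.K × O.K | Y.eta p.1 p.2 ≠ 0 ∧ (p.1 = τ ∨ p.1 = O.bar τ)}
      = ↑(({τ, O.bar τ} : Finset O.K) ×ˢ Y.nbhd τ) := by
    ext ⟨p₁, p₂⟩
    simp only [Set.mem_ofPred_eq, Finset.coe_product, Set.mem_prod, Finset.coe_insert,
      Finset.coe_singleton, Set.mem_insert_iff, Set.mem_singleton_iff, Finset.mem_coe, mem_nbhd]
    constructor
    · rintro ⟨h, rfl | rfl⟩
      exacts [⟨Or.inl rfl, h⟩, ⟨Or.inr rfl, Y.eta_bar_left_ne_zero_iff.mp h⟩]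
    · rintro ⟨rfl | rfl, h⟩
      exacts [⟨h, Or.inl rfl⟩, ⟨Y.eta_bar_left_ne_zero_iff.mpr h, Or.inr rfl⟩]
  rw [findProb, hset, finsum_mem_coe_finset, Finset.sum_product,
    Finset.sum_pair (O.bar_ne τ).symm, Finset.sum_add_distrib]

theorem tsum_ite_edge_fst (a : O.K → ℝ≥0∞) :
    ∑' p : O.K × O.K, (if Y.eta p.1 p.2 ≠ 0 then a p.1 else 0)
      = ∑' τ, ((Y.mult * Y.deg τ : ℕ) : ℝ≥0∞) * a τ := by
  rw [ENNReal.tsum_prod (f := fun τ τ' => if Y.eta τ τ' ≠ 0 then a τ else 0)]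
  refine tsum_congr fun τ => ?_
  rw [tsum_eq_sum (s := Y.nbhd τ) fun τ' hτ' => if_neg (by rwa [mem_nbhd] at hτ'),
    Finset.sum_congr rfl fun τ' hτ' => if_pos (Y.mem_nbhd.mp hτ'), Finset.sum_const,
    card_nbhd, nsmul_eq_mul]

theorem tsum_ite_edge_snd (a : O.K → ℝ≥0∞) :
    ∑' p : O.K × O.K, (if Y.eta p.1 p.2 ≠ 0 then a p.2 else 0)
      = ∑' τ, ((Y.mult * Y.deg τ : ℕ) : ℝ≥0∞) * a τ := by
  rw [← tsum_ite_edge_fst, ← (Equiv.prodComm O.K O.K).tsum_eq]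
  exact tsum_congr fun p => by rw [Equiv.prodComm_apply, Prod.fst_swap, Prod.snd_swap, Y.eta_symm]

variable {Y} {f : O.K → ℂ}

theorem statVec_of_not_edge {τ₁ τ₂ : O.K} (h : Y.eta τ₁ τ₂ = 0) : Y.statVec f (τ₁, τ₂) = 0 := by
  simp [statVec, dstar, shift, h]

theorem statVec_of_edge {τ₁ τ₂ : O.K} (h : Y.eta τ₁ τ₂ ≠ 0) :
    Y.statVec f (τ₁, τ₂) = ((Real.sqrt 2 : ℝ) : ℂ)⁻¹ *
      (Y.c τ₁ * f τ₁ - Complex.I * ((Y.eta τ₁ τ₂ : ℂ) * (Y.c τ₂ * f τ₂))) := by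
  have h' : Y.eta τ₂ τ₁ ≠ 0 := by rwa [Y.eta_symm]
  simp only [statVec, dstar, shift, if_pos h, if_pos h']

variable (hsym : ∀ τ, f (O.bar τ) = f τ)
include hsym

theorem d_statVec (hm : Y.mult ≠ 0) (τ : O.K) :
    Y.d (Y.statVec f) τ = ((Real.sqrt 2 : ℝ) : ℂ)⁻¹ * f τ := by
  have hcf : ∑ τ' ∈ Y.nbhd τ, (Y.eta τ τ' : ℂ) * (Y.c τ' * f τ') = 0 :=
    Y.sum_nbhd_eta_mul_eq_zero _ (fun σ => by rw [c_bar, hsym]) τ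
  have hc : ((Y.mult * Y.deg τ : ℕ) : ℂ) * (Y.c τ * Y.c τ) = 1 := by
    rw [c_mul_self, mul_inv_cancel₀ (Nat.cast_ne_zero.mpr (Y.mult_mul_deg_ne_zero hm τ))]
  have hsum : ∑ τ' ∈ Y.nbhd τ, Y.statVec f (τ, τ')
      = ((Real.sqrt 2 : ℝ) : ℂ)⁻¹ * ((Y.mult * Y.deg τ : ℕ) * (Y.c τ * f τ)) := by
    rw [Finset.sum_congr rfl fun τ' hτ' => statVec_of_edge (Y.mem_nbhd.mp hτ'),
      ← Finset.mul_sum, Finset.sum_sub_distrib, Finset.sum_const, ← Finset.mul_sum, hcf,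
      mul_zero, sub_zero, card_nbhd, nsmul_eq_mul]
  rw [d_apply, hsum]
  linear_combination (((Real.sqrt 2 : ℝ) : ℂ)⁻¹ * f τ) * hc

theorem walk_statVec (hm : Y.mult ≠ 0) : Y.walk (Y.statVec f) = Complex.I • Y.statVec f := by
  funext ⟨τ₁, τ₂⟩
  by_cases h : Y.eta τ₁ τ₂ = 0
  · simp [walk, shift, h, statVec_of_not_edge h]
  have h' : Y.eta τ₂ τ₁ ≠ 0 := by rwa [Y.eta_symm]
  have hη : (Y.eta τ₁ τ₂ : ℂ) * Y.eta τ₁ τ₂ = 1 := by exact_mod_cast Y.eta_mul_self h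
  simp only [walk, shift, dstar, Y.eta_symm τ₂ τ₁, if_pos h, d_statVec hsym hm,
    statVec_of_edge h, statVec_of_edge h', Pi.smul_apply, smul_eq_mul]
  linear_combination (((Real.sqrt 2 : ℝ) : ℂ)⁻¹ * Complex.I * (Y.c τ₁ * f τ₁)) * hη
    + ((Y.eta τ₁ τ₂ : ℂ) * Y.c τ₂ * ((Real.sqrt 2 : ℝ) : ℂ)⁻¹ * f τ₂) * Complex.I_sq

theorem norm_statVec_sq_add_norm_statVec_bar_sq {τ₁ τ₂ : O.K} (h : Y.eta τ₁ τ₂ ≠ 0) :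
    ‖Y.statVec f (τ₁, τ₂)‖ ^ 2 + ‖Y.statVec f (O.bar τ₁, τ₂)‖ ^ 2
      = ‖Y.c τ₁ * f τ₁‖ ^ 2 + ‖Y.c τ₂ * f τ₂‖ ^ 2 := by
  rw [statVec_of_edge h, statVec_of_edge (Y.eta_bar_left_ne_zero_iff.mpr h), Y.eta_bar_left,
    c_bar, hsym, norm_inv_sqrt_two_mul_sq, norm_inv_sqrt_two_mul_sq]
  set A := Y.c τ₁ * f τ₁
  set B := Complex.I * ((Y.eta τ₁ τ₂ : ℂ) * (Y.c τ₂ * f τ₂))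
  have hB : ‖B‖ = ‖Y.c τ₂ * f τ₂‖ := by rw [norm_mul, Complex.norm_I, one_mul, Y.norm_eta_mul h]
  have hpar := parallelogram_law_with_norm ℝ A B
  push_cast
  rw [neg_mul, mul_neg, sub_neg_eq_add, ← hB]
  linarith

theorem findProb_statVec (hm : Y.mult ≠ 0) (n : ℕ) (τ : O.K) :
    Y.findProb n (Y.statVec f) τ
      = ‖f τ‖ ^ 2 + ∑ τ' ∈ Y.nbhd τ, ‖f τ'‖ ^ 2 / (Y.mult * Y.deg τ') := by
  rw [findProb_eq_sum_nbhd, iterate_walk_of_walk_eq_smul _ (walk_statVec hsym hm)]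
  simp only [Pi.smul_apply, smul_eq_mul, norm_mul, norm_pow, Complex.norm_I, one_pow, one_mul]
  rw [Finset.sum_congr rfl fun τ' hτ' =>
      norm_statVec_sq_add_norm_statVec_bar_sq hsym (Y.mem_nbhd.mp hτ'),
    Finset.sum_add_distrib, Finset.sum_const, card_nbhd, nsmul_eq_mul]
  push_cast
  rw [Y.mult_mul_deg_mul_norm_c_mul_sq hm]
  simp only [norm_c_mul_sq]

theorem tsum_ofReal_norm_statVec_sq (hm : Y.mult ≠ 0) :
    ∑' p, ENNReal.ofReal (‖Y.statVec f p‖ ^ 2) = ∑' τ, ENNReal.ofReal (‖f τ‖ ^ 2) := by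
  set G : O.K × O.K → ℝ≥0∞ := fun p => ENNReal.ofReal (‖Y.statVec f p‖ ^ 2)
  set a : O.K → ℝ≥0∞ := fun τ => ENNReal.ofReal (‖Y.c τ * f τ‖ ^ 2)
  have hinv : Function.Involutive fun p : O.K × O.K => (O.bar p.1, p.2) :=
    fun p => by simp [O.bar_invol]
  have hbar : ∑' p : O.K × O.K, G (O.bar p.1, p.2) = ∑' p, G p := (hinv.toPerm _).tsum_eq G
  have hpair : ∀ p : O.K × O.K, G p + G (O.bar p.1, p.2)
      = (if Y.eta p.1 p.2 ≠ 0 then a p.1 else 0) + (if Y.eta p.1 p.2 ≠ 0 then a p.2 else 0) := by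
    rintro ⟨τ₁, τ₂⟩
    by_cases h : Y.eta τ₁ τ₂ = 0
    · have h' : Y.eta (O.bar τ₁) τ₂ = 0 := by rw [Y.eta_bar_left, h, neg_zero]
      simp [G, h, statVec_of_not_edge h, statVec_of_not_edge h']
    · simp only [G, a, if_pos h]
      rw [← ENNReal.ofReal_add (by positivity) (by positivity),
        ← ENNReal.ofReal_add (by positivity) (by positivity),
        norm_statVec_sq_add_norm_statVec_bar_sq hsym h]
  have ha : ∀ τ, ((Y.mult * Y.deg τ : ℕ) : ℝ≥0∞) * a τ = ENNReal.ofReal (‖f τ‖ ^ 2) := by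
    intro τ
    rw [← ENNReal.ofReal_natCast, ← ENNReal.ofReal_mul (by positivity)]
    push_cast
    rw [Y.mult_mul_deg_mul_norm_c_mul_sq hm]
  refine (ENNReal.mul_right_inj two_ne_zero ENNReal.ofNat_ne_top).mp ?_
  calc 2 * ∑' p, G p = ∑' p, G p + ∑' p : O.K × O.K, G (O.bar p.1, p.2) := by rw [two_mul, hbar]
    _ = ∑' p : O.K × O.K, ((if Y.eta p.1 p.2 ≠ 0 then a p.1 else 0)
          + (if Y.eta p.1 p.2 ≠ 0 then a p.2 else 0)) := by
      rw [← ENNReal.tsum_add]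
      exact tsum_congr hpair
    _ = 2 * ∑' τ, ENNReal.ofReal (‖f τ‖ ^ 2) := by
      rw [ENNReal.tsum_add, tsum_ite_edge_fst, tsum_ite_edge_snd, tsum_congr ha, two_mul]

theorem tsum_norm_statVec_sq (hm : Y.mult ≠ 0) :
    ∑' p, ‖Y.statVec f p‖ ^ 2 = ∑' τ, ‖f τ‖ ^ 2 := by
  rw [tsum_eq_toReal_tsum_ofReal fun _ => by positivity, tsum_ofReal_norm_statVec_sq hsym hm,
    ← tsum_eq_toReal_tsum_ofReal fun _ => by positivity]

end GroverStructure

open GroverStructure in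
theorem findProb_down_of_symmetric_state_general
    (O : OrientedSet) (Y : GroverStructure O) (hYm : Y.mult = 2)
    (f : O.K → ℂ)
    (hsym : ∀ τ, f (O.bar τ) = f τ)
    (hnorm : ∑' τ, ‖f τ‖ ^ 2 = (1 : ℝ)) :
    (∑' p, ‖Y.statVec f p‖ ^ 2 = (1 : ℝ)) ∧
    (Y.walk (Y.statVec f) = fun p => Complex.I * Y.statVec f p) ∧
    (∀ (n : ℕ) (τ : O.K),
      Y.findProb n (Y.statVec f) τ
        = (1 / 2) * ‖f τ‖ ^ 2 + (1 / 2) * ‖f (O.bar τ)‖ ^ 2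
          + ∑ᶠ τ' ∈ {τ' | Y.eta τ τ' ≠ 0}, (1 / (2 * (Y.deg τ' : ℝ))) * ‖f τ'‖ ^ 2) ∧
    (∀ (n m : ℕ) (τ : O.K),
      Y.findProb n (Y.statVec f) τ = Y.findProb m (Y.statVec f) τ) ∧
    (∀ Nq : ℕ, Nat.card O.K = 2 * Nq →
      (∀ τ, f τ = ((Real.sqrt (2 * (Nq : ℝ)) : ℝ) : ℂ)⁻¹) →
      ∀ (n : ℕ) (τ : O.K),
        Y.findProb n (Y.statVec f) τ
          = 1 / (2 * (Nq : ℝ))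
            + ∑ᶠ τ' ∈ {τ' | Y.eta τ τ' ≠ 0},
                (1 / (2 * (Y.deg τ' : ℝ))) * (1 / (2 * (Nq : ℝ)))) := by
  have hm : Y.mult ≠ 0 := by rw [hYm]; exact two_ne_zero
  have hprob : ∀ (n : ℕ) (τ : O.K), Y.findProb n (Y.statVec f) τ
      = (1 / 2) * ‖f τ‖ ^ 2 + (1 / 2) * ‖f (O.bar τ)‖ ^ 2
        + ∑ᶠ τ' ∈ {τ' | Y.eta τ τ' ≠ 0}, (1 / (2 * (Y.deg τ' : ℝ))) * ‖f τ'‖ ^ 2 := by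
    intro n τ
    rw [findProb_statVec hsym hm, finsum_mem_eq_sum_nbhd, hsym, hYm]
    push_cast
    congr 1
    · ring
    · exact Finset.sum_congr rfl fun τ' _ => by ring
  refine ⟨(tsum_norm_statVec_sq hsym hm).trans hnorm, walk_statVec hsym hm, hprob,
    fun n m τ => by rw [hprob, hprob], fun Nq _ hconst n τ => ?_⟩
  have hval : ∀ σ, ‖f σ‖ ^ 2 = 1 / (2 * (Nq : ℝ)) := fun σ => by
    rw [hconst, norm_inv, Complex.norm_real, Real.norm_of_nonneg (Real.sqrt_nonneg _), inv_pow,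
      Real.sq_sqrt (by positivity), one_div]
  simp only [hprob, hval]
  ring

/-- For a unit vector `f ∈ C_+^q(K,ℂ)`, the state
`η = (1/√2)(I − i S^down) d_{Y_q}* f` is a unit vector with `U_q^down η = iη`, and the
finding probability at every time `n` at `[τ]` equals
`(1/2)|f(τ)|² + (1/2)|f(τ̄)|² + ∑_{(τ,τ')∈E(Y_q)} (2 deg_Y(τ'))⁻¹ |f(τ')|²`;
in particular it is independent of `n`, and for the constant function
`f ≡ (2|S_q|)^{-1/2}` it equals
`1/(2|S_q|) + ∑_{(τ,τ')∈E(Y_q)} (2 deg_Y(τ'))⁻¹ (2|S_q|)⁻¹`. -/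
theorem findProb_down_of_symmetric_state
    (O : OrientedSet) (Y : GroverStructure O) (hYm : Y.mult = 2)
    (f : O.K → ℂ) (hf2 : Memℓp f 2)
    (hsym : ∀ τ, f (O.bar τ) = f τ)
    (hnorm : ∑' τ, ‖f τ‖ ^ 2 = (1 : ℝ)) :
    (∑' p, ‖Y.statVec f p‖ ^ 2 = (1 : ℝ)) ∧
    (Y.walk (Y.statVec f) = fun p => Complex.I * Y.statVec f p) ∧
    (∀ (n : ℕ) (τ : O.K),
      Y.findProb n (Y.statVec f) τ
        = (1 / 2) * ‖f τ‖ ^ 2 + (1 / 2) * ‖f (O.bar τ)‖ ^ 2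
          + ∑ᶠ τ' ∈ {τ' | Y.eta τ τ' ≠ 0}, (1 / (2 * (Y.deg τ' : ℝ))) * ‖f τ'‖ ^ 2) ∧
    (∀ (n m : ℕ) (τ : O.K),
      Y.findProb n (Y.statVec f) τ = Y.findProb m (Y.statVec f) τ) ∧
    (∀ Nq : ℕ, Nat.card O.K = 2 * Nq →
      (∀ τ, f τ = ((Real.sqrt (2 * (Nq : ℝ)) : ℝ) : ℂ)⁻¹) →
      ∀ (n : ℕ) (τ : O.K),
        Y.findProb n (Y.statVec f) τ
          = 1 / (2 * (Nq : ℝ))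
            + ∑ᶠ τ' ∈ {τ' | Y.eta τ τ' ≠ 0},
                (1 / (2 * (Y.deg τ' : ℝ))) * (1 / (2 * (Nq : ℝ)))) :=
  findProb_down_of_symmetric_state_general O Y hYm f hsym hnorm
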